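/- arXiv:2310.09567 — 3 statements merged into one kernel-verified Lean document; each statement's English description precedes it below -/
import Mathlib

section
/- For a sinogram g that is 2π-periodic in β and satisfies the fan-beam symmetry condition, the angular average p(s) = ∫₀^{2π} g(s, β) dβ is an even function of s. -/
open Real MeasureTheory intervalIntegral

/-- The angular average of a fan-beam symmetric sinogram is even. -/
theorem angular_average_even
    (r : ℝ) (hr : 0 < r)
    (g : ℝ → ℝ → ℝ)
    (hcont : Continuous fun x : ℝ × ℝ => g x.1 x.2)
    (hper : ∀ s β : ℝ, g s (β + 2 * π) = g s β)
    (hsym : ∀ s β : ℝ, g s β = g (-s) (β + π + 2 * Real.arctan (s / r)))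
    (p : ℝ → ℝ)
    (hp : ∀ s, p s = ∫ β in (0 : ℝ)..(2 * π), g s β) :
    ∀ s : ℝ, p (-s) = p s := by
  intro s
  set c : ℝ := π + 2 * Real.arctan (s / r) with hc
  have hper' : Function.Periodic (g (-s)) (2 * π) := fun β => hper (-s) β
  rw [hp, hp]
  have h1 : (∫ β in (0 : ℝ)..(2 * π), g s β)
      = ∫ β in (0 : ℝ)..(2 * π), g (-s) (β + c) := by
    apply intervalIntegral.integral_congr
    intro β _
    rw [hsym s β, hc]; ring_nf
  rw [h1, intervalIntegral.integral_comp_add_right (fun β => g (-s) β) c]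
  have := hper'.intervalIntegral_add_eq (0 + c) 0
  simpa [two_mul, add_comm, add_left_comm, add_assoc] using this.symm
end

section
/- Let g̃ be a sinogram shifted by h* from a sinogram satisfying the fan-beam symmetry. Define p̃(s) = ∫₀^{2π} g̃(s, β) dβ and w(s) = ∫₀^{2π} g̃(−s, β + π + 2·arctan(s/r)) dβ. Then p̃(s) = w(s − 2h*) for all s ∈ ℝ. -/
open Real MeasureTheory intervalIntegral

lemma shift_integral_periodic (f : ℝ → ℝ) (hper : Function.Periodic f (2 * π)) (c : ℝ) :
    (∫ β in (0:ℝ)..(2 * π), f (β + c)) = ∫ β in (0:ℝ)..(2 * π), f β := by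
  rw [intervalIntegral.integral_comp_add_right, zero_add]
  have := hper.intervalIntegral_add_eq c 0
  simpa [add_comm] using this

/-- For a shifted sinogram, the angular averages p̃ and w are shifted by 2h*. -/
theorem angular_average_shifted
    (r : ℝ) (hr : 0 < r) (hstar : ℝ)
    (g : ℝ → ℝ → ℝ)
    (hcont : Continuous fun x : ℝ × ℝ => g x.1 x.2)
    (hper : ∀ s β : ℝ, g s (β + 2 * π) = g s β)
    (hsym : ∀ s β : ℝ, g s β = g (-s) (β + π + 2 * Real.arctan (s / r)))
    (gt : ℝ → ℝ → ℝ)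
    (hgt : ∀ s β : ℝ, gt s β = g (s - hstar) β)
    (pt w : ℝ → ℝ)
    (hpt : ∀ s, pt s = ∫ β in (0 : ℝ)..(2 * π), gt s β)
    (hw : ∀ s, w s = ∫ β in (0 : ℝ)..(2 * π), gt (-s) (β + π + 2 * Real.arctan (s / r))) :
    ∀ s : ℝ, pt s = w (s - 2 * hstar) := by
  intro s
  have hperiodic : ∀ a : ℝ, Function.Periodic (g a) (2 * π) := fun a β => hper a β
  rw [hpt, hw]
  have h1 : (∫ β in (0:ℝ)..(2 * π), gt s β)
      = ∫ β in (0:ℝ)..(2 * π), g (hstar - s) β := by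
    calc (∫ β in (0:ℝ)..(2 * π), gt s β)
        = ∫ β in (0:ℝ)..(2 * π), g (-(s - hstar)) (β + (π + 2 * Real.arctan ((s - hstar) / r))) := by
          refine intervalIntegral.integral_congr fun β _ => ?_
          rw [hgt, hsym (s - hstar) β, add_assoc]
      _ = ∫ β in (0:ℝ)..(2 * π), g (-(s - hstar)) β :=
          shift_integral_periodic _ (hperiodic _) _
      _ = ∫ β in (0:ℝ)..(2 * π), g (hstar - s) β := by rw [neg_sub]
  have h2 : (∫ β in (0:ℝ)..(2 * π), gt (-(s - 2 * hstar)) (β + π + 2 * Real.arctan ((s - 2 * hstar) / r)))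
      = ∫ β in (0:ℝ)..(2 * π), g (hstar - s) β := by
    calc (∫ β in (0:ℝ)..(2 * π), gt (-(s - 2 * hstar)) (β + π + 2 * Real.arctan ((s - 2 * hstar) / r)))
        = ∫ β in (0:ℝ)..(2 * π), g (hstar - s) (β + (π + 2 * Real.arctan ((s - 2 * hstar) / r))) := by
          refine intervalIntegral.integral_congr fun β _ => ?_
          rw [hgt, add_assoc]
          ring_nf
      _ = ∫ β in (0:ℝ)..(2 * π), g (hstar - s) β :=
          shift_integral_periodic _ (hperiodic _) _
  rw [h1, ← h2]
end

section
/- With p̃ and w defined from a shifted fan-beam sinogram g̃, the function p̃ is symmetric about the point s = h*: specifically p̃(h* + t) = p̃(h* − t) for all t ∈ ℝ. -/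
open Real MeasureTheory intervalIntegral

/-- The angular average p̃ of a shifted sinogram is symmetric about s = h*. -/
theorem angular_average_symmetric_about_shift
    (r : ℝ) (hr : 0 < r) (hstar : ℝ)
    (g : ℝ → ℝ → ℝ)
    (hcont : Continuous fun x : ℝ × ℝ => g x.1 x.2)
    (hper : ∀ s β : ℝ, g s (β + 2 * π) = g s β)
    (hsym : ∀ s β : ℝ, g s β = g (-s) (β + π + 2 * Real.arctan (s / r)))
    (gt : ℝ → ℝ → ℝ)
    (hgt : ∀ s β : ℝ, gt s β = g (s - hstar) β)
    (pt : ℝ → ℝ)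
    (hpt : ∀ s, pt s = ∫ β in (0 : ℝ)..(2 * π), gt s β) :
    ∀ t : ℝ, pt (hstar + t) = pt (hstar - t) := by
  intro t
  set c : ℝ := π + 2 * Real.arctan (t / r) with hc
  have hperiodic : Function.Periodic (fun β => g (-t) β) (2 * π) := by
    intro β; exact hper (-t) β
  calc pt (hstar + t) = ∫ β in (0:ℝ)..(2*π), g t β := by
        rw [hpt]
        congr 1; funext β
        rw [hgt]; ring_nf
      _ = ∫ β in (0:ℝ)..(2*π), g (-t) (β + c) := by
        congr 1; funext β
        rw [hsym t β, hc, add_assoc]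
      _ = ∫ β in (0+c)..(2*π+c), g (-t) β := by
        rw [intervalIntegral.integral_comp_add_right (fun β => g (-t) β) c]
      _ = ∫ β in (0:ℝ)..(2*π), g (-t) β := by
        rw [zero_add]
        have := hperiodic.intervalIntegral_add_eq c 0
        simpa [add_comm] using this
      _ = pt (hstar - t) := by
        rw [hpt]
        congr 1; funext β
        rw [hgt]; ring_nf
end
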